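/- Let u be a trace-free 2×2 complex matrix with u² = -η²·I (η ∈ ℂ, η ≠ 0), and let C⁰, C¹, ..., Cⁿ be 2×2 complex matrices at two vertices, written C⁰₀,...,Cⁿ₀ and C⁰₁,...,Cⁿ₁, satisfying the recursion C⁰₁ = C⁰₀, Cⁱ₁ + Cⁱ⁻¹₁·u = Cⁱ₀ + u·Cⁱ⁻¹₀ for 1 ≤ i ≤ n, and Cⁿ₁·u = u·Cⁿ₀. Define A₀ := Cⁿ₀ - η²·Cⁿ⁻²₀ + η⁴·Cⁿ⁻⁴₀ - ⋯ and B₀ := Cⁿ⁻¹₀ - η²·Cⁿ⁻³₀ + ⋯ . Then u·(A₀ - B₀·u) = (A₀ - B₀·u)·u, i.e. A₀ - B₀·u commutes with u. -/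

import Mathlib

/-!
Reducing the reversed polynomial `∑ Cⁱ₀ μⁿ⁻ⁱ` modulo `μ² + η²` and evaluating it on the right at
`μ = -u` (allowed since `(-u)² = -η²`) gives `A₀ - B₀ u = ∑ᵢ Cⁱ₀ (-u)ⁿ⁻ⁱ`. For the partial sums
`Sₖ = ∑_{i ≤ k} Cⁱ₀ (-u)ᵏ⁻ⁱ` the recursion yields `u Sₖ - Sₖ u = u Cᵏ₀ - Cᵏ₁ u` by induction on `k`,
and the top relation `Cⁿ₁ u = u Cⁿ₀` makes this vanish at `k = n`.
-/

open Finset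

section Ring

variable {R : Type*} [Ring R]

theorem sum_range_succ_mul_pow_sub (C : ℕ → R) (w : R) (k : ℕ) :
    ∑ i ∈ range (k + 2), C i * w ^ (k + 1 - i)
      = (∑ i ∈ range (k + 1), C i * w ^ (k - i)) * w + C (k + 1) := by
  rw [sum_range_succ, Nat.sub_self, pow_zero, mul_one, sum_mul]
  congr 1
  refine sum_congr rfl fun i hi => ?_
  rw [mul_assoc, ← pow_succ, Nat.sub_add_comm (Nat.le_of_lt_succ (mem_range.mp hi))]

variable (u : R) (C0 C1 : ℕ → R) {n : ℕ}

theorem commutator_sum_mul_neg_pow_eq (h0 : C1 0 = C0 0)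
    (hrec : ∀ i < n, C1 (i + 1) + C1 i * u = C0 (i + 1) + u * C0 i) {k : ℕ} (hk : k ≤ n) :
    u * (∑ i ∈ range (k + 1), C0 i * (-u) ^ (k - i))
      - (∑ i ∈ range (k + 1), C0 i * (-u) ^ (k - i)) * u = u * C0 k - C1 k * u := by
  induction k with
  | zero => simp [h0]
  | succ k ih =>
    set S := ∑ i ∈ range (k + 1), C0 i * (-u) ^ (k - i)
    have hS : u * (S * -u + C0 (k + 1)) - (S * -u + C0 (k + 1)) * u
        = -(u * S - S * u) * u + (u * C0 (k + 1) - C0 (k + 1) * u) := by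
      noncomm_ring
    rw [sum_range_succ_mul_pow_sub, hS, ih (by omega),
      eq_sub_of_add_eq (hrec k (by omega))]
    noncomm_ring

theorem commute_sum_mul_neg_pow (h0 : C1 0 = C0 0)
    (hrec : ∀ i < n, C1 (i + 1) + C1 i * u = C0 (i + 1) + u * C0 i)
    (htop : C1 n * u = u * C0 n) :
    Commute u (∑ i ∈ range (n + 1), C0 i * (-u) ^ (n - i)) := by
  have h := commutator_sum_mul_neg_pow_eq u C0 C1 h0 hrec le_rfl
  rwa [htop, sub_self, sub_eq_zero] at h

end Ring

section Algebra

variable {K A : Type*} [CommSemiring K] [Ring A] [Algebra K A]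

/-- `C n + c • C (n - 2) + c² • C (n - 4) + ⋯`: with `stepTwoSum c C (n - 1)` it gives the
remainder of `∑ C i μⁿ⁻ⁱ` modulo `μ² - c`. -/
def stepTwoSum (c : K) (C : ℕ → A) (n : ℕ) : A :=
  ∑ j ∈ range (n / 2 + 1), c ^ j • C (n - 2 * j)

theorem stepTwoSum_add_two (c : K) (C : ℕ → A) (m : ℕ) :
    stepTwoSum c C (m + 2) = C (m + 2) + c • stepTwoSum c C m := by
  rw [stepTwoSum, stepTwoSum, show (m + 2) / 2 = m / 2 + 1 by omega, sum_range_succ',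
    pow_zero, one_smul, mul_zero, Nat.sub_zero, add_comm, smul_sum]
  refine congrArg (C (m + 2) + ·) (sum_congr rfl fun j _ => ?_)
  rw [pow_succ', mul_smul, show m + 2 - 2 * (j + 1) = m - 2 * j by omega]

theorem sum_mul_pow_sub_eq_stepTwoSum {c : K} {w : A} (hw : w * w = c • 1) (C : ℕ → A)
    {n : ℕ} (hn : 1 ≤ n) :
    ∑ i ∈ range (n + 1), C i * w ^ (n - i) = stepTwoSum c C n + stepTwoSum c C (n - 1) * w := by
  induction n, hn using Nat.le_induction with
  | base => simp [stepTwoSum, sum_range_succ, add_comm]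
  | succ n hn ih =>
    obtain ⟨m, rfl⟩ : ∃ m, n = m + 1 := ⟨n - 1, by omega⟩
    rw [sum_range_succ_mul_pow_sub, ih, stepTwoSum_add_two, add_mul, mul_assoc, hw,
      mul_smul_comm, mul_one]
    simp only [Nat.add_sub_cancel]
    abel

end Algebra

open Finset in
theorem stmt_14_general (n : ℕ) (hn : 1 ≤ n) (η : ℂ)
    (u : Matrix (Fin 2) (Fin 2) ℂ)
    (hu2 : u * u = (-(η ^ 2)) • (1 : Matrix (Fin 2) (Fin 2) ℂ))
    (C0 C1 : ℕ → Matrix (Fin 2) (Fin 2) ℂ)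
    (h0 : C1 0 = C0 0)
    (hrec : ∀ i, 1 ≤ i → i ≤ n → C1 i + C1 (i - 1) * u = C0 i + u * C0 (i - 1))
    (htop : C1 n * u = u * C0 n)
    (A₀ B₀ : Matrix (Fin 2) (Fin 2) ℂ)
    (hA : A₀ = ∑ j ∈ Finset.range (n / 2 + 1), ((-(η ^ 2)) ^ j) • C0 (n - 2 * j))
    (hB : B₀ = ∑ j ∈ Finset.range ((n - 1) / 2 + 1),
      ((-(η ^ 2)) ^ j) • C0 (n - 1 - 2 * j)) :
    u * (A₀ - B₀ * u) = (A₀ - B₀ * u) * u := by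
  have hM : A₀ - B₀ * u = ∑ i ∈ range (n + 1), C0 i * (-u) ^ (n - i) := by
    rw [sum_mul_pow_sub_eq_stepTwoSum (by rwa [neg_mul_neg]) C0 hn, hA, hB, mul_neg,
      ← sub_eq_add_neg, stepTwoSum, stepTwoSum]
  rw [hM]
  refine (commute_sum_mul_neg_pow u C0 C1 h0 (fun i hi => ?_) htop).eq
  simpa using hrec (i + 1) (by omega) (by omega)

open Finset in
/-- Key computation of Lemma 4.10 (fixed point relations): from the polynomial
intertwining recursion, A₀ - B₀·u commutes with u, where A₀ and B₀ are the
alternating sums A₀ = Cⁿ₀ - η²Cⁿ⁻²₀ + ⋯ and B₀ = Cⁿ⁻¹₀ - η²Cⁿ⁻³₀ + ⋯ . -/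
theorem stmt_14 (n : ℕ) (hn : 1 ≤ n) (η : ℂ) (hη : η ≠ 0)
    (u : Matrix (Fin 2) (Fin 2) ℂ) (hutr : u.trace = 0)
    (hu2 : u * u = (-(η ^ 2)) • (1 : Matrix (Fin 2) (Fin 2) ℂ))
    (C0 C1 : ℕ → Matrix (Fin 2) (Fin 2) ℂ)
    (h0 : C1 0 = C0 0)
    (hrec : ∀ i, 1 ≤ i → i ≤ n → C1 i + C1 (i - 1) * u = C0 i + u * C0 (i - 1))
    (htop : C1 n * u = u * C0 n)
    (A₀ B₀ : Matrix (Fin 2) (Fin 2) ℂ)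
    (hA : A₀ = ∑ j ∈ Finset.range (n / 2 + 1), ((-(η ^ 2)) ^ j) • C0 (n - 2 * j))
    (hB : B₀ = ∑ j ∈ Finset.range ((n - 1) / 2 + 1),
      ((-(η ^ 2)) ^ j) • C0 (n - 1 - 2 * j)) :
    u * (A₀ - B₀ * u) = (A₀ - B₀ * u) * u :=
  stmt_14_general n hn η u hu2 C0 C1 h0 hrec htop A₀ B₀ hA hB
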